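/- arXiv:2402.17198 — 3 statements merged into one kernel-verified Lean document; each statement's English description precedes it below -/
import Mathlib

section
/- Every ideal in the ring of Gaussian integers Z[i] that is coprime to 1+i has a unique generator congruent to 1 modulo (1+i)^3. -/
open scoped ComplexConjugate Classical

noncomputable section

/-- The imaginary unit in the Gaussian integers `ℤ[i]`. -/
def iZ : GaussianInt := ⟨0, 1⟩

/-- `n` is primary iff `n ≡ 1 (mod (1+i)^3)`. -/
def IsPrimary (n : GaussianInt) : Prop := (1 + iZ) ^ 3 ∣ n - 1

/-!
`ℤ[i]` is a principal ideal domain, and an ideal coprime to `λ = 1 + i` is generated by some `g`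
with `λ ∤ g`, i.e. with `re g + im g` odd. Since `λ³ = -2 + 2i`, being primary is a congruence
condition on `re` and `im` modulo `4`, and exactly one of the four units `±1, ±i` moves `g` into
that class: the units map bijectively onto `(ℤ[i]/λ³)ˣ`, a group of order `4`. In particular the
only primary unit is `1`, which gives uniqueness among associates.
-/

lemma one_add_iZ_dvd_iff (z : GaussianInt) : 1 + iZ ∣ z ↔ 2 ∣ z.re + z.im := by
  rw [show (1 + iZ : GaussianInt) = ⟨1, 1⟩ by decide]
  constructor
  · rintro ⟨c, rfl⟩
    simp only [Zsqrtd.re_mul, Zsqrtd.im_mul]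
    omega
  · rintro ⟨k, hk⟩
    refine ⟨⟨(z.re + z.im) / 2, (z.im - z.re) / 2⟩, ?_⟩
    ext <;> simp only [Zsqrtd.re_mul, Zsqrtd.im_mul] <;> omega

lemma one_add_iZ_pow_three_dvd_iff (z : GaussianInt) :
    (1 + iZ) ^ 3 ∣ z ↔ 2 ∣ z.re ∧ 2 ∣ z.im ∧ 4 ∣ z.re + z.im := by
  rw [show ((1 + iZ) ^ 3 : GaussianInt) = ⟨-2, 2⟩ by decide]
  constructor
  · rintro ⟨c, rfl⟩
    simp only [Zsqrtd.re_mul, Zsqrtd.im_mul]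
    omega
  · rintro ⟨⟨a, ha⟩, ⟨b, hb⟩, ⟨c, hc⟩⟩
    refine ⟨⟨(z.im - z.re) / 4, -(z.re + z.im) / 4⟩, ?_⟩
    ext <;> simp only [Zsqrtd.re_mul, Zsqrtd.im_mul] <;> omega

lemma isPrimary_iff (z : GaussianInt) :
    IsPrimary z ↔ 2 ∣ z.re - 1 ∧ 2 ∣ z.im ∧ 4 ∣ z.re - 1 + z.im := by
  simp only [IsPrimary, one_add_iZ_pow_three_dvd_iff, Zsqrtd.re_sub, Zsqrtd.im_sub,
    Zsqrtd.re_one, Zsqrtd.im_one, sub_zero]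

lemma not_isUnit_one_add_iZ : ¬IsUnit (1 + iZ) := by
  rw [← Zsqrtd.norm_eq_one_iff' (by norm_num)]
  decide

lemma isUnit_iZ : IsUnit iZ :=
  isUnit_iff_exists_inv.mpr ⟨-iZ, by decide⟩

lemma IsPrimary.eq_one_of_isUnit {u : GaussianInt} (hp : IsPrimary u) (hu : IsUnit u) :
    u = 1 := by
  rw [isPrimary_iff] at hp
  have hnorm : u.re * u.re + u.im * u.im = 1 := by
    rw [← Zsqrtd.norm_eq_one_iff' (by norm_num), Zsqrtd.norm_def] at hu
    linarith
  have hre : -1 ≤ u.re ∧ u.re ≤ 1 := by constructor <;> nlinarith [mul_self_nonneg u.im]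
  have him : -1 ≤ u.im ∧ u.im ≤ 1 := by constructor <;> nlinarith [mul_self_nonneg u.re]
  obtain ⟨hre₁, hre₂⟩ := hre
  obtain ⟨him₁, him₂⟩ := him
  have h : u.re = 1 ∧ u.im = 0 := by
    interval_cases u.re <;> interval_cases u.im <;> omega
  ext <;> simp [h]

lemma IsPrimary.eq_of_associated {a b : GaussianInt} (ha : IsPrimary a) (hb : IsPrimary b)
    (hab : Associated a b) : a = b := by
  obtain ⟨v, rfl⟩ := hab
  have hv : IsPrimary v := by
    have : (v : GaussianInt) - 1 = (a * v - 1) - v * (a - 1) := by ring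
    rw [IsPrimary, this]
    exact dvd_sub hb (dvd_mul_of_dvd_right ha _)
  rw [hv.eq_one_of_isUnit v.isUnit, mul_one]

lemma exists_isUnit_isPrimary_mul {g : GaussianInt} (hg : ¬1 + iZ ∣ g) :
    ∃ u, IsUnit u ∧ IsPrimary (u * g) := by
  rw [one_add_iZ_dvd_iff] at hg
  have hcases : IsPrimary g ∨ IsPrimary (-1 * g) ∨ IsPrimary (iZ * g) ∨ IsPrimary (-iZ * g) := by
    simp only [isPrimary_iff, iZ, Zsqrtd.re_mul, Zsqrtd.im_mul, Zsqrtd.re_neg, Zsqrtd.im_neg,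
      Zsqrtd.re_one, Zsqrtd.im_one]
    omega
  rcases hcases with h | h | h | h
  · exact ⟨1, isUnit_one, by rwa [one_mul]⟩
  · exact ⟨-1, isUnit_one.neg, h⟩
  · exact ⟨iZ, isUnit_iZ, h⟩
  · exact ⟨-iZ, isUnit_iZ.neg, h⟩

lemma not_one_add_iZ_dvd_of_sup_eq_top {g : GaussianInt}
    (hco : Ideal.span {g} ⊔ Ideal.span {1 + iZ} = ⊤) : ¬1 + iZ ∣ g := by
  intro hdvd
  rw [sup_eq_right.mpr (Ideal.span_singleton_le_span_singleton.mpr hdvd),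
    Ideal.span_singleton_eq_top] at hco
  exact not_isUnit_one_add_iZ hco

/-- Every ideal of `ℤ[i]` coprime to `(1+i)` has a unique generator congruent to `1`
modulo `(1+i)^3` (a unique primary generator). -/
theorem stmt0 (I : Ideal GaussianInt)
    (hco : I ⊔ Ideal.span {(1 + iZ : GaussianInt)} = ⊤) :
    ∃! g : GaussianInt, I = Ideal.span {g} ∧ (1 + iZ) ^ 3 ∣ g - 1 := by
  obtain ⟨g, rfl⟩ := (IsPrincipalIdealRing.principal I).principal
  rw [Ideal.submodule_span_eq] at hco ⊢
  obtain ⟨u, hu, hprim⟩ := exists_isUnit_isPrimary_mul (not_one_add_iZ_dvd_of_sup_eq_top hco)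
  have hspan : Ideal.span {g} = Ideal.span {u * g} :=
    Ideal.span_singleton_eq_span_singleton.mpr (associated_unit_mul_left g u hu).symm
  refine ⟨u * g, ⟨hspan, hprim⟩, fun y ⟨hy, hyprim⟩ => ?_⟩
  refine (hprim.eq_of_associated hyprim ?_).symm
  rw [← Ideal.span_singleton_eq_span_singleton, ← hspan, hy]
end
end

section
/- Let ϖ be a primary prime of Z[i] and k, ℓ ≥ 0 integers. If ℓ = k+1 and k ≡ 3 (mod 4), then g_4(ϖ^k, ϖ^ℓ) = -N(ϖ)^k; if k ≥ ℓ and ℓ ≡ 0 (mod 4), then g_4(ϖ^k, ϖ^ℓ) = φ_K(ϖ^ℓ); and if neither ℓ = k+1 nor (k ≥ ℓ with ℓ ≡ 0 mod 4), then g_4(ϖ^k, ϖ^ℓ) = 0. -/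
/-!
Write `χ = (·/ϖ)₄`. Then `(x/ϖ^ℓ)₄ = χ(x)^ℓ` depends only on `x mod ϖ`, and it is the principal
character iff `4 ∣ ℓ`, because `χ` has order exactly `4`. If `ℓ ≤ k` the additive character
`ẽ(ϖ^k x/ϖ^ℓ)` is trivial, so `g₄` is a multiplicative character sum: `φ_K(ϖ^ℓ)` or `0`.
If `ℓ ≥ k + 2`, translating `x` by `ϖ^(ℓ-k-1) t` fixes the multiplicative factor and multiplies the
sum by `ẽ(t/ϖ) ≠ 1`, so it vanishes. If `ℓ = k + 1` with `4 ∣ ℓ`, the summand depends only on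
`x mod ϖ`; each class has `N(ϖ)^k` lifts, and `Σ_{x mod ϖ, ϖ ∤ x} ẽ(x/ϖ) = -1`.
-/

open scoped ComplexConjugate Classical

noncomputable section

/-- The additive character `ẽ(z) = exp(2πi(z + conj z))`. -/
def eK (z : ℂ) : ℂ := Complex.exp (2 * Real.pi * Complex.I * (z + conj z))

/-- An abstract quartic residue symbol on `ℤ[i]`, characterized by its defining
properties: at odd primes it is the fourth root of unity congruent to
`a^((N ϖ - 1)/4) mod ϖ`, it vanishes when the arguments are not coprime, it is
extended multiplicatively in the denominator (being `1` at units), and it is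
multiplicative in the numerator. -/
structure QuarticResidueSymbol where
  sym : GaussianInt → GaussianInt → GaussianInt
  sym_pow_four : ∀ ϖ a : GaussianInt, Prime ϖ → IsCoprime ϖ 2 → IsCoprime a ϖ →
    sym a ϖ ^ 4 = 1
  sym_spec : ∀ ϖ a : GaussianInt, Prime ϖ → IsCoprime ϖ 2 → IsCoprime a ϖ →
    ϖ ∣ sym a ϖ - a ^ (((Zsqrtd.norm ϖ - 1) / 4).toNat)
  sym_eq_zero : ∀ ϖ a : GaussianInt, Prime ϖ → IsCoprime ϖ 2 → ¬ IsCoprime a ϖ →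
    sym a ϖ = 0
  sym_mul_right : ∀ a c c' : GaussianInt, IsCoprime c 2 → IsCoprime c' 2 →
    sym a (c * c') = sym a c * sym a c'
  sym_unit_right : ∀ (a : GaussianInt) (u : GaussianIntˣ), sym a (u : GaussianInt) = 1
  sym_mul_left : ∀ a b c : GaussianInt, IsCoprime c 2 →
    sym (a * b) c = sym a c * sym b c

/-- An abstract quartic residue symbol together with the associated quartic Gauss sum
`g₄(k,c) = Σ_{x mod c} (x/c)₄ ẽ(kx/c)`, where the sum is over any complete residue
system modulo `c`. -/
structure QuarticGaussSum extends QuarticResidueSymbol where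
  gauss : GaussianInt → GaussianInt → ℂ
  gauss_def : ∀ (k c : GaussianInt), IsCoprime c 2 → ∀ R : Finset GaussianInt,
    (∀ y : GaussianInt, ∃! x, x ∈ R ∧ c ∣ y - x) →
    gauss k c = ∑ x ∈ R, GaussianInt.toComplex (sym x c) *
      eK (GaussianInt.toComplex (k * x) / GaussianInt.toComplex c)

local notation "ℤ[i]" => GaussianInt

namespace Zsqrtd

variable {d : ℤ}

def equivFun : ℤ√d ≃ₗ[ℤ] (Fin 2 → ℤ) where
  toFun z := ![z.re, z.im]
  invFun f := ⟨f 0, f 1⟩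
  map_add' x y := by funext i; fin_cases i <;> simp
  map_smul' n x := by funext i; fin_cases i <;> simp [zsmul_eq_mul]
  left_inv x := by simp
  right_inv f := by funext i; fin_cases i <;> simp

def basis : Module.Basis (Fin 2) ℤ (ℤ√d) := .ofEquivFun equivFun

instance : Module.Free ℤ (ℤ√d) := .of_basis basis

instance : Module.Finite ℤ (ℤ√d) := .of_basis basis

theorem algebraNorm_eq_norm (z : ℤ√d) : Algebra.norm ℤ z = z.norm := by
  have hrepr (x : ℤ√d) : basis.repr x = ![x.re, x.im] := by
    ext i; rw [basis, Module.Basis.ofEquivFun_repr_apply]; rfl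
  have h0 : (basis 0 : ℤ√d) = 1 := by rw [basis, Module.Basis.coe_ofEquivFun]; rfl
  have h1 : (basis 1 : ℤ√d) = ⟨0, 1⟩ := by rw [basis, Module.Basis.coe_ofEquivFun]; rfl
  rw [Algebra.norm_eq_matrix_det basis, Matrix.det_fin_two]
  simp only [Algebra.leftMulMatrix_eq_repr_mul, hrepr, h0, h1]
  simp [Zsqrtd.norm_def]

end Zsqrtd

theorem GaussianInt.natCard_quotient_span_singleton (z : ℤ[i]) :
    Nat.card (ℤ[i] ⧸ Ideal.span {z}) = z.norm.natAbs := by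
  rw [← Submodule.cardQuot_apply, ← Ideal.absNorm_apply, Ideal.absNorm_span_singleton,
    Zsqrtd.algebraNorm_eq_norm]

theorem Ideal.Quotient.mk_span_singleton_eq_mk_iff {A : Type*} [CommRing A] {c x y : A} :
    Ideal.Quotient.mk (Ideal.span {c}) x = Ideal.Quotient.mk _ y ↔ c ∣ x - y := by
  rw [Ideal.Quotient.mk_eq_mk_iff_sub_mem, Ideal.mem_span_singleton]

def IsCompleteResidueSystem {A : Type*} [CommRing A] (c : A) (R : Finset A) : Prop :=
  ∀ y : A, ∃! x, x ∈ R ∧ c ∣ y - x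

namespace IsCompleteResidueSystem

variable {A : Type*} [CommRing A] {c : A} {R : Finset A}

theorem of_forall_exists (hex : ∀ y, ∃ x ∈ R, c ∣ y - x)
    (hinj : ∀ x ∈ R, ∀ x' ∈ R, c ∣ x - x' → x = x') : IsCompleteResidueSystem c R := by
  intro y
  obtain ⟨x, hx, hyx⟩ := hex y
  refine ⟨x, ⟨hx, hyx⟩, fun x' ⟨hx', hyx'⟩ => hinj x' hx' x hx ?_⟩
  simpa using dvd_sub hyx hyx'

theorem eq_of_dvd_sub (hR : IsCompleteResidueSystem c R) {x x' : A} (hx : x ∈ R) (hx' : x' ∈ R)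
    (h : c ∣ x - x') : x = x' :=
  (hR x).unique ⟨hx, by simp⟩ ⟨hx', h⟩

def rep (hR : IsCompleteResidueSystem c R) (y : A) : A := (hR y).exists.choose

theorem rep_mem (hR : IsCompleteResidueSystem c R) (y : A) : hR.rep y ∈ R :=
  (hR y).exists.choose_spec.1

theorem dvd_sub_rep (hR : IsCompleteResidueSystem c R) (y : A) : c ∣ y - hR.rep y :=
  (hR y).exists.choose_spec.2

theorem eq_rep (hR : IsCompleteResidueSystem c R) {x y : A} (hx : x ∈ R) (h : c ∣ y - x) :
    x = hR.rep y :=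
  (hR y).unique ⟨hx, h⟩ ⟨hR.rep_mem y, hR.dvd_sub_rep y⟩

theorem sum_comp_mul_add {M : Type*} [AddCommMonoid M] (hR : IsCompleteResidueSystem c R)
    {f : A → M} (hf : ∀ x y, c ∣ x - y → f x = f y) {u : A} (hu : IsCoprime u c) (t : A) :
    ∑ x ∈ R, f (u * x + t) = ∑ x ∈ R, f x := by
  obtain ⟨a, b, hab⟩ := hu
  refine Finset.sum_nbij' (fun x => hR.rep (u * x + t)) (fun x => hR.rep (a * (x - t)))
    (fun x _ => hR.rep_mem _) (fun x _ => hR.rep_mem _) (fun x hx => ?_) (fun x hx => ?_)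
    (fun x _ => hf _ _ (hR.dvd_sub_rep _))
  · obtain ⟨s, hs⟩ := hR.dvd_sub_rep (u * x + t)
    refine (hR.eq_rep hx ⟨-(b * x) - a * s, ?_⟩).symm
    linear_combination x * hab - a * hs
  · obtain ⟨s, hs⟩ := hR.dvd_sub_rep (a * (x - t))
    refine (hR.eq_rep hx ⟨-(b * (x - t)) - u * s, ?_⟩).symm
    linear_combination (x - t) * hab - u * hs

theorem sum_comp_add {M : Type*} [AddCommMonoid M] (hR : IsCompleteResidueSystem c R)
    {f : A → M} (hf : ∀ x y, c ∣ x - y → f x = f y) (t : A) :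
    ∑ x ∈ R, f (x + t) = ∑ x ∈ R, f x := by
  simpa using hR.sum_comp_mul_add hf isCoprime_one_left t

theorem sum_comp_mul {M : Type*} [AddCommMonoid M] (hR : IsCompleteResidueSystem c R)
    {f : A → M} (hf : ∀ x y, c ∣ x - y → f x = f y) {u : A} (hu : IsCoprime u c) :
    ∑ x ∈ R, f (u * x) = ∑ x ∈ R, f x := by
  simpa using hR.sum_comp_mul_add hf hu 0

theorem filter_dvd_eq_singleton (hR : IsCompleteResidueSystem c R) :
    R.filter (c ∣ ·) = {hR.rep 0} := by
  refine Finset.eq_singleton_iff_unique_mem.mpr ⟨?_, fun x hx => ?_⟩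
  · simpa [hR.rep_mem] using hR.dvd_sub_rep 0
  · obtain ⟨hxR, hcx⟩ := Finset.mem_filter.mp hx
    exact hR.eq_rep hxR (by simpa using hcx)

theorem card_eq_natCard_quotient (hR : IsCompleteResidueSystem c R) :
    R.card = Nat.card (A ⧸ Ideal.span {c}) := by
  rw [← Nat.card_eq_finsetCard]
  refine Nat.card_eq_of_bijective (fun x : R => Ideal.Quotient.mk _ (x : A)) ⟨?_, fun q => ?_⟩
  · rintro ⟨x, hx⟩ ⟨x', hx'⟩ h
    exact Subtype.ext (hR.eq_of_dvd_sub hx hx' (Ideal.Quotient.mk_span_singleton_eq_mk_iff.mp h))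
  · obtain ⟨y, rfl⟩ := Ideal.Quotient.mk_surjective q
    exact ⟨⟨hR.rep y, hR.rep_mem y⟩, Ideal.Quotient.mk_span_singleton_eq_mk_iff.mpr
      (dvd_sub_comm.mp (hR.dvd_sub_rep y))⟩

theorem exists_of_finite (c : A) [Finite (A ⧸ Ideal.span {c})] :
    ∃ R : Finset A, IsCompleteResidueSystem c R := by
  have := Fintype.ofFinite (A ⧸ Ideal.span {c})
  let s := Function.surjInv (Ideal.Quotient.mk_surjective (I := Ideal.span {c}))
  have hs (q) : Ideal.Quotient.mk _ (s q) = q := Function.surjInv_eq _ q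
  refine ⟨Finset.univ.image s, of_forall_exists (fun y => ?_) ?_⟩
  · exact ⟨s (Ideal.Quotient.mk _ y), by simp,
      Ideal.Quotient.mk_span_singleton_eq_mk_iff.mp (hs _).symm⟩
  · simp only [Finset.mem_image, Finset.mem_univ, true_and]
    rintro _ ⟨q, rfl⟩ _ ⟨q', rfl⟩ h
    rw [← hs q, ← hs q', Ideal.Quotient.mk_span_singleton_eq_mk_iff.mpr h]

variable [IsDomain A] {a b : A} {R₁ R₂ : Finset A}

theorem injOn_add_mul (hR₁ : IsCompleteResidueSystem a R₁) (ha : a ≠ 0) :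
    Set.InjOn (fun p : A × A => p.1 + a * p.2) ↑(R₁ ×ˢ R₂) := by
  rintro ⟨y, z⟩ hyz ⟨y', z'⟩ hyz' h
  simp only [Finset.coe_product, Set.mem_prod, Finset.mem_coe] at hyz hyz' h
  have hy : y = y' := hR₁.eq_of_dvd_sub hyz.1 hyz'.1 ⟨z' - z, by linear_combination h⟩
  subst hy
  simp [mul_left_cancel₀ ha (add_left_cancel h)]

theorem image_add_mul [DecidableEq A] (hR₁ : IsCompleteResidueSystem a R₁)
    (hR₂ : IsCompleteResidueSystem b R₂) (ha : a ≠ 0) :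
    IsCompleteResidueSystem (a * b) ((R₁ ×ˢ R₂).image fun p => p.1 + a * p.2) := by
  refine of_forall_exists (fun w => ?_) ?_
  · obtain ⟨t, ht⟩ := hR₁.dvd_sub_rep w
    obtain ⟨s, hs⟩ := hR₂.dvd_sub_rep t
    refine ⟨hR₁.rep w + a * hR₂.rep t, Finset.mem_image.mpr
      ⟨(hR₁.rep w, hR₂.rep t), Finset.mem_product.mpr ⟨hR₁.rep_mem w, hR₂.rep_mem t⟩, rfl⟩, s, ?_⟩
    linear_combination ht + a * hs
  · simp only [Finset.mem_image, Finset.mem_product]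
    rintro _ ⟨⟨y, z⟩, ⟨hy, hz⟩, rfl⟩ _ ⟨⟨y', z'⟩, ⟨hy', hz'⟩, rfl⟩ ⟨s, hs⟩
    have hyy : y = y' := hR₁.eq_of_dvd_sub hy hy' ⟨b * s - (z - z'), by linear_combination hs⟩
    subst hyy
    rw [hR₂.eq_of_dvd_sub hz hz' ⟨s, mul_left_cancel₀ ha (by linear_combination hs)⟩]

end IsCompleteResidueSystem

theorem GaussianInt.exists_isCompleteResidueSystem {c : ℤ[i]} (hc : c ≠ 0) :
    ∃ R : Finset ℤ[i], IsCompleteResidueSystem c R ∧ R.card = c.norm.natAbs := by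
  have hcard := GaussianInt.natCard_quotient_span_singleton c
  have : Finite (ℤ[i] ⧸ Ideal.span {c}) :=
    Nat.finite_of_card_ne_zero (by simpa [hcard] using hc)
  obtain ⟨R, hR⟩ := IsCompleteResidueSystem.exists_of_finite c
  exact ⟨R, hR, hR.card_eq_natCard_quotient.trans hcard⟩

theorem eK_add (z w : ℂ) : eK (z + w) = eK z * eK w := by
  rw [eK, eK, eK, ← Complex.exp_add, map_add]
  ring_nf

theorem eK_eq_one_iff (z : ℂ) : eK z = 1 ↔ ∃ n : ℤ, z + conj z = n := by
  have h2πI : 2 * Real.pi * Complex.I ≠ 0 := by simp [Real.pi_ne_zero]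
  rw [eK, Complex.exp_eq_one_iff]
  refine exists_congr fun n => ?_
  rw [mul_comm (n : ℂ), mul_right_inj' h2πI]

theorem eK_toComplex (a : ℤ[i]) : eK a = 1 :=
  (eK_eq_one_iff _).mpr
    ⟨2 * a.re, by rw [Complex.add_conj, ← GaussianInt.intCast_re]; push_cast; ring⟩

def eKDiv (x c : ℤ[i]) : ℂ := eK ((x : ℂ) / c)

theorem eKDiv_add (x y c : ℤ[i]) : eKDiv (x + y) c = eKDiv x c * eKDiv y c := by
  rw [eKDiv, map_add, add_div, eK_add, eKDiv, eKDiv]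

theorem eKDiv_of_dvd {x c : ℤ[i]} (h : c ∣ x) : eKDiv x c = 1 := by
  obtain ⟨t, rfl⟩ := h
  rcases eq_or_ne c 0 with rfl | hc
  · simpa [eKDiv] using eK_toComplex 0
  · rw [eKDiv, map_mul, mul_div_cancel_left₀ _ (by simpa using hc), eK_toComplex]

theorem eKDiv_congr {x y c : ℤ[i]} (h : c ∣ x - y) : eKDiv x c = eKDiv y c := by
  rw [← sub_add_cancel x y, eKDiv_add, eKDiv_of_dvd h, one_mul]

theorem eKDiv_mul_mul_left {a : ℤ[i]} (x c : ℤ[i]) (ha : a ≠ 0) :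
    eKDiv (a * x) (a * c) = eKDiv x c := by
  rw [eKDiv, map_mul, map_mul, mul_div_mul_left _ _ (by simpa using ha), eKDiv]

/-- `ẽ(t/c) = 1` for all `t` would put `2/c` in `ℤ[i]`. -/
theorem exists_eKDiv_ne_one {c : ℤ[i]} (hc : c ≠ 0) (h2 : ¬ c ∣ 2) : ∃ t, eKDiv t c ≠ 1 := by
  by_contra! h
  obtain ⟨m, hm⟩ := (eK_eq_one_iff _).mp (h 1)
  obtain ⟨n, hn⟩ := (eK_eq_one_iff _).mp (h ⟨0, 1⟩)
  have hc' : (c : ℂ) ≠ 0 := by simpa using hc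
  apply h2
  refine ⟨⟨m, -n⟩, GaussianInt.toComplex_injective ?_⟩
  have hcw : (c : ℂ) * (c : ℂ)⁻¹ = 1 := mul_inv_cancel₀ hc'
  simp only [map_one, GaussianInt.toComplex_def', Int.cast_zero, Int.cast_one,
    zero_add, one_mul, div_eq_mul_inv, map_mul, Complex.conj_I] at hm hn
  rw [map_ofNat, map_mul, GaussianInt.toComplex_def' m (-n)]
  push_cast
  linear_combination (c : ℂ) * hm - (c : ℂ) * Complex.I * hn - 2 * hcw
    + (c : ℂ) * ((c : ℂ)⁻¹ - conj (c : ℂ)⁻¹) * Complex.I_sq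

theorem IsCompleteResidueSystem.sum_eKDiv_eq_zero {c : ℤ[i]} {R : Finset ℤ[i]}
    (hR : IsCompleteResidueSystem c R) (hc : c ≠ 0) (h2 : ¬ c ∣ 2) :
    ∑ x ∈ R, eKDiv x c = 0 := by
  obtain ⟨t, ht⟩ := exists_eKDiv_ne_one hc h2
  have h := hR.sum_comp_add (f := (eKDiv · c)) (fun _ _ => eKDiv_congr) t
  simp only [eKDiv_add, ← Finset.sum_mul] at h
  by_contra hne
  exact ht ((mul_eq_left₀ hne).mp h)

theorem IsCompleteResidueSystem.sum_filter_not_dvd_eKDiv {c : ℤ[i]} {R : Finset ℤ[i]}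
    (hR : IsCompleteResidueSystem c R) (hc : c ≠ 0) (h2 : ¬ c ∣ 2) :
    ∑ x ∈ R with ¬ c ∣ x, eKDiv x c = -1 := by
  have h := Finset.sum_filter_add_sum_filter_not R (c ∣ ·) (eKDiv · c)
  rw [hR.sum_eKDiv_eq_zero hc h2, hR.filter_dvd_eq_singleton, Finset.sum_singleton,
    eKDiv_of_dvd (by simpa using hR.dvd_sub_rep 0)] at h
  linear_combination h

theorem IsPrimary.isCoprime_two {ϖ : ℤ[i]} (hpr : IsPrimary ϖ) (hp : Prime ϖ) :
    IsCoprime ϖ 2 := by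
  refine hp.coprime_iff_not_dvd.mpr fun h => hp.not_isUnit (isUnit_of_dvd_one ?_)
  have h1i : ϖ ∣ 1 + iZ := hp.dvd_of_dvd_pow (h.trans ⟨iZ, by decide⟩ : ϖ ∣ (1 + iZ) ^ 2)
  simpa using dvd_sub dvd_rfl (h1i.trans ((dvd_pow_self _ three_ne_zero).trans hpr))

theorem GaussianInt.norm_emod_four_ne_three (z : ℤ[i]) : z.norm % 4 ≠ 3 := by
  have key : ∀ a b : ZMod 4, a * a + b * b ≠ 3 := by decide
  intro h
  apply key z.re z.im
  have : ((3 : ℤ) : ZMod 4) = z.norm := by rw [← h]; exact ZMod.intCast_mod _ 4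
  push_cast [Zsqrtd.norm_def] at this
  linear_combination -this

theorem GaussianInt.not_two_dvd_norm {ϖ : ℤ[i]} (h2 : IsCoprime ϖ 2) : ¬ (2 : ℤ) ∣ ϖ.norm := by
  have hN : IsCoprime ((ϖ.norm : ℤ) : ℤ[i]) 2 := by
    rw [Zsqrtd.norm_eq_mul_conj]
    exact h2.mul_left (by simpa [starRingEnd_apply] using h2.map (starRingEnd ℤ[i]))
  intro h
  have h2u : IsUnit (2 : ℤ[i]) := hN.isUnit_of_dvd' (by exact_mod_cast h) dvd_rfl
  rw [← Zsqrtd.norm_eq_one_iff] at h2u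
  exact absurd h2u (by decide)

theorem GaussianInt.five_le_norm {ϖ : ℤ[i]} (hp : Prime ϖ) (h2 : IsCoprime ϖ 2) : 5 ≤ ϖ.norm := by
  have h0 : ϖ.norm ≠ 0 := by simpa using hp.ne_zero
  have h1 : ϖ.norm ≠ 1 := fun h => hp.not_isUnit (Zsqrtd.norm_eq_one_iff.mp (by rw [h]; rfl))
  have := GaussianInt.norm_nonneg ϖ
  have := GaussianInt.not_two_dvd_norm h2
  have := GaussianInt.norm_emod_four_ne_three ϖ
  omega

theorem FiniteField.exists_ne_zero_pow_ne_one {F : Type*} [Field F] [Finite F] {n : ℕ}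
    (hn : 0 < n) (hlt : n < Nat.card F - 1) : ∃ a : F, a ≠ 0 ∧ a ^ n ≠ 1 := by
  obtain ⟨g, hg⟩ := IsCyclic.exists_ofOrder_eq_natCard (α := Fˣ)
  refine ⟨g, g.ne_zero, fun h => ?_⟩
  have := orderOf_dvd_of_pow_eq_one (Units.ext (by simpa using h) : g ^ n = 1)
  rw [hg, Nat.card_units] at this
  exact absurd (Nat.le_of_dvd hn this) (by omega)

/-- Distinct fourth roots of unity differ by a divisor of `4`. -/
theorem eq_of_prime_dvd_sub_of_pow_four_eq_one {A : Type*} [CommRing A] [IsDomain A]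
    {p u v : A} (hp : Prime p) (h2 : ¬ p ∣ 2) (hu : u ^ 4 = 1) (hv : v ^ 4 = 1)
    (h : p ∣ u - v) : u = v := by
  by_contra hne
  have hsum : u ^ 3 + u ^ 2 * v + u * v ^ 2 + v ^ 3 = 0 :=
    (mul_eq_zero.mp (by linear_combination hu - hv :
      (u - v) * (u ^ 3 + u ^ 2 * v + u * v ^ 2 + v ^ 3) = 0)).resolve_left (sub_ne_zero.mpr hne)
  have h4v : p ∣ 2 * 2 * v ^ 3 :=
    h.trans ⟨-(u ^ 2 + 2 * u * v + 3 * v ^ 2), by linear_combination hsum⟩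
  rcases hp.dvd_or_dvd h4v with h4 | hv3
  · exact h2 ((hp.dvd_or_dvd h4).elim id id)
  · have := (hp.dvd_of_dvd_pow hv3).pow four_ne_zero
    exact hp.not_isUnit (isUnit_of_dvd_one (by rwa [hv] at this))

namespace QuarticResidueSymbol

variable (S : QuarticResidueSymbol) {ϖ : ℤ[i]}

theorem sym_pow_right (h2 : IsCoprime ϖ 2) (a : ℤ[i]) (n : ℕ) :
    S.sym a (ϖ ^ n) = S.sym a ϖ ^ n := by
  induction n with
  | zero => simpa using S.sym_unit_right a 1
  | succ n ih => rw [pow_succ, S.sym_mul_right _ _ _ h2.pow_left h2, ih, pow_succ]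

theorem sym_congr (hp : Prime ϖ) (h2 : IsCoprime ϖ 2) {a b : ℤ[i]} (h : ϖ ∣ a - b) :
    S.sym a ϖ = S.sym b ϖ := by
  have hab : IsCoprime a ϖ ↔ IsCoprime b ϖ := by
    rw [← sub_add_cancel a b]
    obtain ⟨t, ht⟩ := h
    rw [ht, add_comm, IsCoprime.add_mul_left_left_iff]
  by_cases ha : IsCoprime a ϖ
  · have hb := hab.mp ha
    refine eq_of_prime_dvd_sub_of_pow_four_eq_one hp (hp.coprime_iff_not_dvd.mp h2)
      (S.sym_pow_four ϖ a hp h2 ha) (S.sym_pow_four ϖ b hp h2 hb) ?_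
    convert dvd_add (dvd_sub (S.sym_spec ϖ a hp h2 ha) (S.sym_spec ϖ b hp h2 hb))
      (h.trans (sub_dvd_pow_sub_pow a b ((ϖ.norm - 1) / 4).toNat)) using 1
    ring
  · rw [S.sym_eq_zero ϖ a hp h2 ha, S.sym_eq_zero ϖ b hp h2 (hab.not.mp ha)]

theorem sym_pow_right_congr (hp : Prime ϖ) (h2 : IsCoprime ϖ 2) {a b : ℤ[i]} (h : ϖ ∣ a - b)
    (n : ℕ) : S.sym a (ϖ ^ n) = S.sym b (ϖ ^ n) := by
  rw [S.sym_pow_right h2, S.sym_pow_right h2, S.sym_congr hp h2 h]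

theorem sym_pow_right_of_four_dvd (hp : Prime ϖ) (h2 : IsCoprime ϖ 2) (x : ℤ[i]) {m : ℕ}
    (hm : 4 ∣ m) : S.sym x (ϖ ^ m) = if IsCoprime x (ϖ ^ m) then 1 else 0 := by
  rcases eq_or_ne m 0 with rfl | hm0
  · simpa [isCoprime_one_right] using S.sym_unit_right x 1
  rw [S.sym_pow_right h2, IsCoprime.pow_right_iff (Nat.pos_of_ne_zero hm0)]
  split_ifs with hx
  · obtain ⟨j, rfl⟩ := hm
    rw [pow_mul, S.sym_pow_four ϖ x hp h2 hx, one_pow]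
  · rw [S.sym_eq_zero ϖ x hp h2 hx, zero_pow hm0]

/-- `χ = (·/ϖ)₄` has order exactly `4`: its square is `x ↦ x^(2e) mod ϖ` with
`0 < 2e < N(ϖ) - 1`, which is not trivial on the cyclic group `(ℤ[i]/ϖ)ˣ`. -/
theorem exists_sym_sq_eq_neg_one (hp : Prime ϖ) (h2 : IsCoprime ϖ 2) :
    ∃ u, IsCoprime u ϖ ∧ S.sym u ϖ ^ 2 = -1 := by
  have := PrincipalIdealRing.isMaximal_of_irreducible hp.irreducible
  let := Ideal.Quotient.field (Ideal.span {ϖ})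
  have hN := GaussianInt.five_le_norm hp h2
  have hcard := GaussianInt.natCard_quotient_span_singleton ϖ
  have : Finite (ℤ[i] ⧸ Ideal.span {ϖ}) := Nat.finite_of_card_ne_zero (by omega)
  set e := ((ϖ.norm - 1) / 4).toNat
  obtain ⟨a, ha0, ha⟩ := FiniteField.exists_ne_zero_pow_ne_one
    (F := ℤ[i] ⧸ Ideal.span {ϖ}) (n := 2 * e) (by omega) (by omega)
  obtain ⟨u, rfl⟩ := Ideal.Quotient.mk_surjective a
  have hu : IsCoprime u ϖ := by
    rw [isCoprime_comm, hp.coprime_iff_not_dvd, ← Ideal.mem_span_singleton,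
      ← Ideal.Quotient.eq_zero_iff_mem]
    exact ha0
  refine ⟨u, hu, ?_⟩
  have h4 := S.sym_pow_four ϖ u hp h2 hu
  rcases mul_eq_zero.mp (by linear_combination h4 :
    (S.sym u ϖ ^ 2 - 1) * (S.sym u ϖ ^ 2 + 1) = 0) with h | h
  · refine absurd ?_ ha
    rw [← map_pow, ← map_one (Ideal.Quotient.mk _), Ideal.Quotient.mk_span_singleton_eq_mk_iff]
    have := (S.sym_spec ϖ u hp h2 hu).trans (sub_dvd_pow_sub_pow _ _ 2)
    rw [← pow_mul, sub_eq_zero.mp h] at this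
    simpa [mul_comm] using this.neg_right
  · exact eq_neg_of_add_eq_zero_left h

theorem sum_sym_pow_right_eq_zero (hp : Prime ϖ) (h2 : IsCoprime ϖ 2) {ℓ : ℕ} (hℓ : ¬ 4 ∣ ℓ)
    {R : Finset ℤ[i]} (hR : IsCompleteResidueSystem (ϖ ^ ℓ) R) :
    ∑ x ∈ R, (S.sym x (ϖ ^ ℓ) : ℂ) = 0 := by
  obtain ⟨u, hu, hu2⟩ := S.exists_sym_sq_eq_neg_one hp h2
  have hord : orderOf (S.sym u ϖ) = 2 ^ 2 :=
    orderOf_eq_prime_pow (by rw [pow_one, hu2]; decide)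
      (by rw [show 2 ^ (1 + 1) = 2 * 2 from rfl, pow_mul, hu2]; norm_num)
  have hne : (S.sym u (ϖ ^ ℓ) : ℂ) ≠ 1 := by
    rw [S.sym_pow_right h2, ← map_one GaussianInt.toComplex, Ne, GaussianInt.toComplex_inj,
      ← orderOf_dvd_iff_pow_eq_one, hord]
    exact hℓ
  have hℓ0 : ℓ ≠ 0 := by rintro rfl; exact hℓ (dvd_zero 4)
  have h := hR.sum_comp_mul (f := fun x => (S.sym x (ϖ ^ ℓ) : ℂ))
    (fun x y hxy => by rw [S.sym_pow_right_congr hp h2 ((dvd_pow_self ϖ hℓ0).trans hxy)])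
    hu.pow_right
  simp only [S.sym_mul_left _ _ _ h2.pow_left, map_mul, ← Finset.mul_sum] at h
  by_contra hsum
  exact hne ((mul_eq_right₀ hsum).mp h)

end QuarticResidueSymbol

namespace QuarticGaussSum

variable (S : QuarticGaussSum) {ϖ : ℤ[i]}

theorem gauss_eq_sum {c : ℤ[i]} (hc : IsCoprime c 2) {R : Finset ℤ[i]}
    (hR : IsCompleteResidueSystem c R) (k : ℤ[i]) :
    S.gauss k c = ∑ x ∈ R, (S.sym x c : ℂ) * eKDiv (k * x) c :=
  S.gauss_def k c hc R hR

theorem gauss_pow_pow_of_le (h2 : IsCoprime ϖ 2) {k ℓ : ℕ} (hℓk : ℓ ≤ k) {R : Finset ℤ[i]}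
    (hR : IsCompleteResidueSystem (ϖ ^ ℓ) R) :
    S.gauss (ϖ ^ k) (ϖ ^ ℓ) = ∑ x ∈ R, (S.sym x (ϖ ^ ℓ) : ℂ) := by
  rw [S.gauss_eq_sum h2.pow_left hR]
  refine Finset.sum_congr rfl fun x _ => ?_
  rw [eKDiv_of_dvd ((pow_dvd_pow ϖ hℓk).mul_right x), mul_one]

theorem gauss_pow_pow_eq_card (hp : Prime ϖ) (h2 : IsCoprime ϖ 2) {k ℓ : ℕ} (hℓk : ℓ ≤ k)
    (hℓ : 4 ∣ ℓ) {R : Finset ℤ[i]} (hR : IsCompleteResidueSystem (ϖ ^ ℓ) R) :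
    S.gauss (ϖ ^ k) (ϖ ^ ℓ) = (R.filter (IsCoprime · (ϖ ^ ℓ))).card := by
  rw [S.gauss_pow_pow_of_le h2 hℓk hR, Finset.natCast_card_filter]
  refine Finset.sum_congr rfl fun x _ => ?_
  rw [S.sym_pow_right_of_four_dvd hp h2 x hℓ]
  split_ifs <;> simp

theorem gauss_pow_pow_eq_zero_of_le (hp : Prime ϖ) (h2 : IsCoprime ϖ 2) {k ℓ : ℕ} (hℓk : ℓ ≤ k)
    (hℓ : ¬ 4 ∣ ℓ) : S.gauss (ϖ ^ k) (ϖ ^ ℓ) = 0 := by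
  obtain ⟨R, hR, -⟩ := GaussianInt.exists_isCompleteResidueSystem (pow_ne_zero ℓ hp.ne_zero)
  rw [S.gauss_pow_pow_of_le h2 hℓk hR]
  exact S.sum_sym_pow_right_eq_zero hp h2 hℓ hR

theorem gauss_pow_pow_eq_zero_of_add_two_le (hp : Prime ϖ) (h2 : IsCoprime ϖ 2) {k ℓ : ℕ}
    (hkℓ : k + 2 ≤ ℓ) : S.gauss (ϖ ^ k) (ϖ ^ ℓ) = 0 := by
  obtain ⟨m, rfl⟩ : ∃ m, ℓ = k + m + 2 := ⟨ℓ - k - 2, by omega⟩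
  obtain ⟨R, hR, -⟩ :=
    GaussianInt.exists_isCompleteResidueSystem (pow_ne_zero (k + m + 2) hp.ne_zero)
  obtain ⟨t, ht⟩ := exists_eKDiv_ne_one hp.ne_zero (hp.coprime_iff_not_dvd.mp h2)
  set F : ℤ[i] → ℂ :=
    fun x => (S.sym x (ϖ ^ (k + m + 2)) : ℂ) * eKDiv (ϖ ^ k * x) (ϖ ^ (k + m + 2))
  have hF : ∀ x y, ϖ ^ (k + m + 2) ∣ x - y → F x = F y := fun x y hxy => by
    simp only [F]
    rw [S.sym_pow_right_congr hp h2 ((dvd_pow_self ϖ (by omega)).trans hxy),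
      eKDiv_congr (by rw [← mul_sub]; exact hxy.mul_left _)]
  have hshift (x : ℤ[i]) : F (x + ϖ ^ (m + 1) * t) = F x * eKDiv t ϖ := by
    have hsym : S.sym (x + ϖ ^ (m + 1) * t) (ϖ ^ (k + m + 2)) = S.sym x (ϖ ^ (k + m + 2)) :=
      S.sym_pow_right_congr hp h2 ⟨ϖ ^ m * t, by ring⟩ _
    have hexp : eKDiv (ϖ ^ (k + m + 1) * t) (ϖ ^ (k + m + 2)) = eKDiv t ϖ := by
      rw [show k + m + 2 = k + m + 1 + 1 from rfl, pow_succ _ (k + m + 1),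
        eKDiv_mul_mul_left t ϖ (pow_ne_zero _ hp.ne_zero)]
    have hmul : ϖ ^ k * (x + ϖ ^ (m + 1) * t) = ϖ ^ k * x + ϖ ^ (k + m + 1) * t := by ring
    simp only [F, hsym, hmul, eKDiv_add, hexp, mul_assoc]
  have h := hR.sum_comp_add hF (ϖ ^ (m + 1) * t)
  simp only [hshift, ← Finset.sum_mul] at h
  rw [S.gauss_eq_sum h2.pow_left hR]
  by_contra hsum
  exact ht ((mul_eq_left₀ hsum).mp h)

theorem gauss_pow_pow_succ (hp : Prime ϖ) (h2 : IsCoprime ϖ 2) {k : ℕ} (hk : 4 ∣ k + 1) :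
    S.gauss (ϖ ^ k) (ϖ ^ (k + 1)) = -(ϖ.norm : ℂ) ^ k := by
  obtain ⟨R₁, hR₁, -⟩ := GaussianInt.exists_isCompleteResidueSystem hp.ne_zero
  obtain ⟨R₂, hR₂, hcard⟩ :=
    GaussianInt.exists_isCompleteResidueSystem (pow_ne_zero k hp.ne_zero)
  have hR := hR₁.image_add_mul hR₂ hp.ne_zero
  rw [← pow_succ'] at hR
  have hterm (y z : ℤ[i]) : (S.sym (y + ϖ * z) (ϖ ^ (k + 1)) : ℂ)
      * eKDiv (ϖ ^ k * (y + ϖ * z)) (ϖ ^ (k + 1)) = if ¬ ϖ ∣ y then eKDiv y ϖ else 0 := by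
    have hmul : ϖ ^ k * (y + ϖ * z) = ϖ ^ k * y + ϖ ^ (k + 1) * z := by ring
    rw [S.sym_pow_right_congr hp h2 ⟨z, by ring⟩, S.sym_pow_right_of_four_dvd hp h2 y hk,
      IsCoprime.pow_right_iff k.succ_pos, isCoprime_comm, hp.coprime_iff_not_dvd, hmul,
      eKDiv_add, eKDiv_of_dvd (dvd_mul_right _ _), mul_one, pow_succ,
      eKDiv_mul_mul_left y ϖ (pow_ne_zero k hp.ne_zero)]
    split_ifs <;> simp
  have hnorm : (ϖ ^ k).norm = ϖ.norm ^ k := map_pow Zsqrtd.normMonoidHom ϖ k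
  rw [S.gauss_eq_sum h2.pow_left hR, Finset.sum_image (hR₁.injOn_add_mul hp.ne_zero),
    Finset.sum_product]
  simp only [hterm, Finset.sum_const, ← Finset.smul_sum, ← Finset.sum_filter]
  rw [hR₁.sum_filter_not_dvd_eKDiv hp.ne_zero (hp.coprime_iff_not_dvd.mp h2), hcard,
    nsmul_eq_mul, GaussianInt.natCast_natAbs_norm, hnorm]
  push_cast
  ring

end QuarticGaussSum

/-- Evaluation of quartic Gauss sums at prime powers: for a primary prime `ϖ`,
if `ℓ = k+1` and `k ≡ 3 (mod 4)` then `g₄(ϖ^k, ϖ^ℓ) = -N(ϖ)^k`;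
if `k ≥ ℓ` and `ℓ ≡ 0 (mod 4)` then `g₄(ϖ^k, ϖ^ℓ) = φ_K(ϖ^ℓ)`
(the number of reduced residues modulo `ϖ^ℓ`); otherwise `g₄(ϖ^k, ϖ^ℓ) = 0`. -/
theorem stmt11 (S : QuarticGaussSum) (ϖ : GaussianInt)
    (hp : Prime ϖ) (hpr : IsPrimary ϖ) (k ℓ : ℕ) :
    (ℓ = k + 1 → k % 4 = 3 →
      S.gauss (ϖ ^ k) (ϖ ^ ℓ) = -((Zsqrtd.norm ϖ : ℂ)) ^ k) ∧
    (ℓ ≤ k → ℓ % 4 = 0 →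
      ∀ R : Finset GaussianInt, (∀ y : GaussianInt, ∃! x, x ∈ R ∧ ϖ ^ ℓ ∣ y - x) →
        S.gauss (ϖ ^ k) (ϖ ^ ℓ) =
          ((R.filter (fun d => IsCoprime d (ϖ ^ ℓ))).card : ℂ)) ∧
    (¬ (ℓ = k + 1) → ¬ (ℓ ≤ k ∧ ℓ % 4 = 0) →
      S.gauss (ϖ ^ k) (ϖ ^ ℓ) = 0) := by
  have h2 := hpr.isCoprime_two hp
  refine ⟨fun hℓ hk => ?_, fun hℓk hℓ R hR => ?_, fun hℓ hnot => ?_⟩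
  · subst hℓ
    exact S.gauss_pow_pow_succ hp h2 (by omega)
  · exact S.gauss_pow_pow_eq_card hp h2 hℓk (Nat.dvd_of_mod_eq_zero hℓ) hR
  · rcases le_or_gt ℓ k with hℓk | hkℓ
    · exact S.gauss_pow_pow_eq_zero_of_le hp h2 hℓk
        fun h => hnot ⟨hℓk, Nat.mod_eq_zero_of_dvd h⟩
    · exact S.gauss_pow_pow_eq_zero_of_add_two_le hp h2 (by omega)
end
end

section
/- Two cusps κ = α/γ and κ' = α'/γ' of Γ₁(N) (written with (α,γ) = (α',γ') = 1) are equivalent under Γ₁(N) if and only if α ≡ α' (mod N) and γ ≡ γ' (mod N). -/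
/-! An equivalence `g (α, γ) = u (α', γ')` with `g ≡ 1 (mod N)` gives `u α' ≡ α` and
`u γ' ≡ γ (mod N)`. Since `(1+i) ∣ N`, both pairs are normalised in the same coordinate, and
comparing the two primary entries modulo `(1+i)³ ∣ N` shows that `u` is primary; but the only
primary unit is `1`. Conversely, congruent coprime pairs are carried to each other by an explicit
matrix of `SL₂` congruent to `1` modulo `N`, over any commutative ring. -/

open scoped ComplexConjugate Classical

noncomputable section

theorem isCoprime_iff_of_dvd_sub {R : Type*} [CommRing R] {x y z : R} (h : z ∣ x - y) :
    IsCoprime x z ↔ IsCoprime y z := by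
  obtain ⟨k, hk⟩ := h
  rw [show x = y + z * k by linear_combination hk, IsCoprime.add_mul_left_left_iff]

theorem dvd_sub_of_forall_dvd_sub_one {R : Type*} [CommRing R] {N : R}
    {g : Matrix (Fin 2) (Fin 2) R} (hg : ∀ i j, N ∣ g i j - (1 : Matrix (Fin 2) (Fin 2) R) i j)
    (x y : R) : N ∣ g 0 0 * x + g 0 1 * y - x ∧ N ∣ g 1 0 * x + g 1 1 * y - y := by
  have h00 := hg 0 0
  have h01 := hg 0 1
  have h10 := hg 1 0
  have h11 := hg 1 1
  simp only [Matrix.one_apply_eq, Matrix.one_apply_ne (show (0 : Fin 2) ≠ 1 by decide),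
    Matrix.one_apply_ne (show (1 : Fin 2) ≠ 0 by decide), sub_zero] at h00 h01 h10 h11
  constructor
  · rw [show g 0 0 * x + g 0 1 * y - x = (g 0 0 - 1) * x + g 0 1 * y by ring]
    exact (h00.mul_right x).add (h01.mul_right y)
  · rw [show g 1 0 * x + g 1 1 * y - y = g 1 0 * x + (g 1 1 - 1) * y by ring]
    exact (h10.mul_right x).add (h11.mul_right y)

theorem exists_det_eq_one_of_isCoprime {R : Type*} [CommRing R] {N α γ α' γ' : R}
    (hco : IsCoprime α γ) (hco' : IsCoprime α' γ') (hα : N ∣ α - α') (hγ : N ∣ γ - γ') :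
    ∃ g : Matrix (Fin 2) (Fin 2) R, g.det = 1 ∧
      (∀ i j, N ∣ g i j - (1 : Matrix (Fin 2) (Fin 2) R) i j) ∧
      g 0 0 * α + g 0 1 * γ = α' ∧ g 1 0 * α + g 1 1 * γ = γ' := by
  obtain ⟨a, b, hab⟩ := hco
  obtain ⟨a', b', hab'⟩ := hco'
  -- `g = M' !![1, c; 0, 1] M⁻¹` for `M = !![α, -b; γ, a]`, `M' = !![α', -b'; γ', a']` in `SL₂`,
  -- with `c` chosen so that `M⁻¹ M' !![1, c; 0, 1] ≡ 1 (mod N)`.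
  set c := a * b' - a' * b
  refine ⟨!![α' * (a - c * γ) + b' * γ, α' * (b + c * α) - b' * α;
      γ' * (a - c * γ) - a' * γ, γ' * (b + c * α) + a' * α], ?_, ?_, ?_, ?_⟩
  · rw [Matrix.det_fin_two_of]
    linear_combination (a * α + b * γ) * hab' + hab
  · let π := Ideal.Quotient.mk (Ideal.span {N})
    have hπ (x : R) : N ∣ x ↔ π x = 0 := (Ideal.Quotient.eq_zero_iff_dvd N x).symm
    have hα' : π α' = π α := by rw [← sub_eq_zero, ← map_sub, ← hπ, dvd_sub_comm]; exact hα
    have hγ' : π γ' = π γ := by rw [← sub_eq_zero, ← map_sub, ← hπ, dvd_sub_comm]; exact hγ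
    have hab₁ := congrArg π hab
    have hab₁' := congrArg π hab'
    simp only [map_add, map_mul, map_one, hα', hγ'] at hab₁ hab₁'
    intro i j
    rw [hπ]
    fin_cases i <;> fin_cases j <;>
      simp only [Fin.zero_eta, Fin.mk_one, Fin.isValue, Matrix.of_apply, Matrix.cons_val',
        Matrix.cons_val_zero, Matrix.cons_val_one, Matrix.cons_val_fin_one, Matrix.one_apply_eq,
        ne_eq, zero_ne_one, one_ne_zero, not_false_eq_true, Matrix.one_apply_ne, sub_zero,
        map_sub, map_add, map_mul, map_one, hα', hγ', c]
    · linear_combination (1 - π b' * π γ) * hab₁ + π b * π γ * hab₁'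
    · linear_combination π b' * π α * hab₁ - π b * π α * hab₁'
    · linear_combination π a' * π γ * hab₁ - π a * π γ * hab₁'
    · linear_combination π b' * π γ * hab₁ + (1 - π b * π γ) * hab₁'
  · simp only [Matrix.of_apply, Matrix.cons_val', Matrix.cons_val_zero, Matrix.cons_val_one,
      Matrix.empty_val', Matrix.cons_val_fin_one]
    linear_combination α' * hab
  · simp only [Matrix.of_apply, Matrix.cons_val', Matrix.cons_val_zero, Matrix.cons_val_one,
      Matrix.empty_val', Matrix.cons_val_fin_one]
    linear_combination γ' * hab

/-- `N(u - 1) = 2 - 2 Re u` lies in `[0, 4]`, and it is divisible by `N((1+i)³) = 8`. -/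
theorem eq_one_of_isUnit_of_isPrimary {u : GaussianInt} (hu : IsUnit u) (hp : IsPrimary u) :
    u = 1 := by
  have hnorm : u.re * u.re + u.im * u.im = 1 := by
    simpa [Zsqrtd.norm] using (Zsqrtd.norm_eq_one_iff' (by norm_num) u).2 hu
  have hsub : (u - 1).norm = 2 - 2 * u.re := by
    simp only [Zsqrtd.norm, Zsqrtd.re_sub, Zsqrtd.im_sub, Zsqrtd.re_one, Zsqrtd.im_one]
    linear_combination hnorm
  have hre : -1 ≤ u.re := by nlinarith
  have h8 : (8 : ℤ) ∣ (u - 1).norm :=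
    (show ((1 + iZ) ^ 3).norm = (8 : ℤ) by decide) ▸ Zsqrtd.normMonoidHom.map_dvd hp
  have hnonneg := GaussianInt.norm_nonneg (u - 1)
  rw [← sub_eq_zero, ← GaussianInt.norm_eq_zero]
  omega

theorem isPrimary_of_dvd_mul_sub {u x x' : GaussianInt} (hx : IsPrimary x) (hx' : IsPrimary x')
    (h : (1 + iZ) ^ 3 ∣ u * x' - x) : IsPrimary u := by
  have hu : u - 1 = (u * x' - x) - u * (x' - 1) + (x - 1) := by ring
  unfold IsPrimary at *
  rw [hu]
  exact (h.sub (hx'.mul_left u)).add hx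

/-- Two cusps `κ = α/γ` and `κ' = α'/γ'` of `Γ₁(N)` (written with coprime pairs,
normalized so that the numerator is primary when it is coprime to `λ = 1+i`, and the
denominator is primary otherwise) are equivalent under `Γ₁(N)` if and only if
`α ≡ α' (mod N)` and `γ ≡ γ' (mod N)`. -/
theorem stmt19 (N α γ α' γ' : GaussianInt) (hN : (1 + iZ) ^ 4 ∣ N)
    (hco : IsCoprime α γ) (hco' : IsCoprime α' γ')
    (hnorm₁ : IsCoprime α (1 + iZ) → IsPrimary α)
    (hnorm₂ : ¬ IsCoprime α (1 + iZ) → IsPrimary γ)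
    (hnorm₁' : IsCoprime α' (1 + iZ) → IsPrimary α')
    (hnorm₂' : ¬ IsCoprime α' (1 + iZ) → IsPrimary γ') :
    (∃ g : Matrix (Fin 2) (Fin 2) GaussianInt,
        g.det = 1 ∧
        (∀ i j, N ∣ (g i j - (1 : Matrix (Fin 2) (Fin 2) GaussianInt) i j)) ∧
        ∃ u : GaussianIntˣ,
          g 0 0 * α + g 0 1 * γ = (u : GaussianInt) * α' ∧
          g 1 0 * α + g 1 1 * γ = (u : GaussianInt) * γ') ↔
      (N ∣ α - α' ∧ N ∣ γ - γ') := by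
  have hcube : (1 + iZ) ^ 3 ∣ N := (pow_dvd_pow _ (by norm_num)).trans hN
  constructor
  · rintro ⟨g, -, hg, u, h₀, h₁⟩
    obtain ⟨hα, hγ⟩ := dvd_sub_of_forall_dvd_sub_one hg α γ
    rw [h₀] at hα
    rw [h₁] at hγ
    have hcop : IsCoprime α (1 + iZ) ↔ IsCoprime α' (1 + iZ) := by
      rw [← isCoprime_iff_of_dvd_sub ((dvd_pow_self _ three_ne_zero).trans (hcube.trans hα)),
        isCoprime_mul_unit_left_left u.isUnit]
    have hu : (u : GaussianInt) = 1 := by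
      refine eq_one_of_isUnit_of_isPrimary u.isUnit ?_
      by_cases hα₀ : IsCoprime α (1 + iZ)
      · exact isPrimary_of_dvd_mul_sub (hnorm₁ hα₀) (hnorm₁' (hcop.1 hα₀)) (hcube.trans hα)
      · exact isPrimary_of_dvd_mul_sub (hnorm₂ hα₀) (hnorm₂' (mt hcop.2 hα₀)) (hcube.trans hγ)
    rw [hu, one_mul] at hα hγ
    exact ⟨dvd_sub_comm.1 hα, dvd_sub_comm.1 hγ⟩
  · rintro ⟨hα, hγ⟩
    obtain ⟨g, hdet, hg, h₀, h₁⟩ := exists_det_eq_one_of_isCoprime hco hco' hα hγ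
    exact ⟨g, hdet, hg, 1, by rw [h₀, Units.val_one, one_mul], by rw [h₁, Units.val_one, one_mul]⟩
end
end
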